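/- Let E : ℝⁿ → ℝⁿ be a continuous linear map, ε > 0, β ∈ ℝ, and for y ∈ ℝⁿ define w(y)ᵢ = 1/(2(|(E y)ᵢ| + ε)) and the elastic operator P_elastic(y) := (β·𝟏 + (1−β)·w(y)) ⊙ E(y). Then for all x, Δ ∈ ℝⁿ, the influence function of P_elastic at x in direction Δ exists and equals (β·𝟏 + 2(1−β)·ε·w(x)²) ⊙ E(Δ − x). -/

import Mathlib

/-!
Along the segment `t ↦ x + t(Δ - x)` each coordinate of `E` is affine in `t`, and each coordinate
of `P` is the scalar map `s ↦ (β + (1 - β)/(2(|s| + ε))) s` applied to the corresponding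
coordinate of `E`. That map equals `β s + (1 - β)/2 · s/(|s| + ε)`, and `s ↦ s/(|s| + ε)` is
differentiable everywhere, also at the kink of `|·|`, with derivative `ε/(|s| + ε)²`. The influence
function is the right derivative at `t = 0` of `P` along the segment, so the chain rule gives it.
-/

open Filter Topology

theorem hasDerivAt_div_abs_add {ε : ℝ} (hε : 0 < ε) (s : ℝ) :
    HasDerivAt (fun s => s / (|s| + ε)) (ε / (|s| + ε) ^ 2) s := by
  rcases eq_or_ne s 0 with rfl | hs
  · have hderiv : ε / (|(0 : ℝ)| + ε) ^ 2 = (|(0 : ℝ)| + ε)⁻¹ := by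
      rw [abs_zero, zero_add]
      field_simp
    rw [hderiv, hasDerivAt_iff_tendsto_slope_zero]
    refine ((((continuous_abs.tendsto 0).add_const ε).inv₀ (by positivity)).mono_left
      nhdsWithin_le_nhds).congr' ?_
    filter_upwards [self_mem_nhdsWithin] with t (ht : t ≠ 0)
    simp only [zero_add, zero_div, sub_zero, smul_eq_mul]
    field_simp
  · have h := (hasDerivAt_id s).div ((hasDerivAt_abs hs).add_const ε) (by positivity)
    refine h.congr_deriv ?_
    rw [id, one_mul, self_mul_sign]
    ring

noncomputable def elasticShrink (ε β s : ℝ) : ℝ :=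
  (β + (1 - β) * (1 / (2 * (|s| + ε)))) * s

theorem hasDerivAt_elasticShrink {ε : ℝ} (hε : 0 < ε) (β s : ℝ) :
    HasDerivAt (elasticShrink ε β) (β + 2 * (1 - β) * ε * (1 / (2 * (|s| + ε))) ^ 2) s := by
  have hsplit : elasticShrink ε β = fun s => β * s + (1 - β) / 2 * (s / (|s| + ε)) := by
    ext r
    have : |r| + ε ≠ 0 := by positivity
    simp only [elasticShrink]
    field_simp
  have : |s| + ε ≠ 0 := by positivity
  rw [hsplit]
  refine (((hasDerivAt_id' s).const_mul β).add
    ((hasDerivAt_div_abs_add hε s).const_mul ((1 - β) / 2))).congr_deriv ?_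
  field_simp

theorem tendsto_influence_of_hasDerivAt {V W : Type*} [AddCommGroup V] [Module ℝ V]
    [NormedAddCommGroup W] [NormedSpace ℝ W] {f : V → W} {x Δ : V} {d : W}
    (hf : HasDerivAt (fun t : ℝ => f (x + t • (Δ - x))) d 0) :
    Tendsto (fun t : ℝ => t⁻¹ • (f (t • Δ + (1 - t) • x) - f x)) (𝓝[>] 0) (𝓝 d) := by
  have h := (hasDerivAt_iff_tendsto_slope_zero.mp hf).mono_left (nhdsGT_le_nhdsNE 0)
  convert h using 3 with t
  simp only [zero_add, zero_smul, add_zero]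
  congr 2
  module

theorem influence_function_elastic (n : ℕ)
    (E : (Fin n → ℝ) →L[ℝ] (Fin n → ℝ)) (ε β : ℝ) (hε : 0 < ε)
    (w : (Fin n → ℝ) → Fin n → ℝ)
    (hw : ∀ y i, w y i = 1 / (2 * (|E y i| + ε)))
    (P : (Fin n → ℝ) → Fin n → ℝ)
    (hP : ∀ y i, P y i = (β * 1 + (1 - β) * w y i) * E y i)
    (x Δ : Fin n → ℝ) :
    Filter.Tendsto (fun t : ℝ => t⁻¹ • (P (t • Δ + (1 - t) • x) - P x))
      (nhdsWithin 0 (Set.Ioi 0))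
      (nhds (fun i => (β * 1 + 2 * (1 - β) * ε * (w x i) ^ 2) * E (Δ - x) i)) := by
  refine tendsto_influence_of_hasDerivAt (hasDerivAt_pi.mpr fun i => ?_)
  have hcoord : (fun t : ℝ => P (x + t • (Δ - x)) i)
      = elasticShrink ε β ∘ fun t => E x i + t * E (Δ - x) i := by
    ext t
    simp [elasticShrink, hP, hw]
  have hline : HasDerivAt (fun t : ℝ => E x i + t * E (Δ - x) i) (E (Δ - x) i) 0 := by
    simpa using ((hasDerivAt_id (0 : ℝ)).mul_const (E (Δ - x) i)).const_add (E x i)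
  rw [hcoord, hw, mul_one]
  exact (hasDerivAt_elasticShrink hε β (E x i)).comp_of_eq 0 hline (by simp)
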